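/- For third-order tensors A of size m×n×p and B of size n×s×p, the block circulant matrix of their T-product equals the product of their block circulant matrices: bcirc(A*B) = bcirc(A)·bcirc(B). -/

import Mathlib

open Matrix Kronecker
open scoped ComplexOrder

namespace TProd

/-- A third-order tensor with `p` frontal slices, each a matrix indexed by `ι × κ`. -/
abbrev Tensor (ι κ : Type) (p : ℕ) := Fin p → Matrix ι κ ℂ

variable {p : ℕ} [NeZero p]

/-- Block circulant matrix of a tensor: block `(i,j)` is the frontal slice `A (i - j)`. -/
def bcirc {ι κ : Type} (A : Tensor ι κ p) : Matrix (Fin p × ι) (Fin p × κ) ℂ :=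
  Matrix.of fun ik jl => A (ik.1 - jl.1) ik.2 jl.2

/-- Stack the frontal slices vertically. -/
def tunfold {ι κ : Type} (A : Tensor ι κ p) : Matrix (Fin p × ι) κ ℂ :=
  Matrix.of fun ik j => A ik.1 ik.2 j

/-- Inverse of `tunfold`. -/
def tfold {ι κ : Type} (M : Matrix (Fin p × ι) κ ℂ) : Tensor ι κ p :=
  fun k => Matrix.of fun a b => M (k, a) b

/-- The T-product `A * B := fold (bcirc A · unfold B)`. -/
noncomputable def tprod {ι κ μ : Type} [Fintype κ] (A : Tensor ι κ p) (B : Tensor κ μ p) :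
    Tensor ι μ p :=
  tfold (bcirc A * tunfold B)

/-- Tensor conjugate transpose: conjugate-transpose each slice and reverse slices 2..p. -/
def tconjT {ι κ : Type} (A : Tensor ι κ p) : Tensor κ ι p := fun k => (A (-k))ᴴ

/-- Tensor transpose: transpose each slice and reverse slices 2..p. -/
def ttransp {ι κ : Type} (A : Tensor ι κ p) : Tensor κ ι p := fun k => (A (-k))ᵀ

/-- The identity tensor: identity first frontal slice, other slices zero. -/
def tid (ι : Type) [DecidableEq ι] (p : ℕ) [NeZero p] : Tensor ι ι p :=
  fun k => if k = 0 then 1 else 0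

/-- Left inverse of `bcirc`: extract the first block column. -/
def bcircInv {ι κ : Type} (M : Matrix (Fin p × ι) (Fin p × κ) ℂ) : Tensor ι κ p :=
  fun k => Matrix.of fun a b => M (k, a) ((0 : Fin p), b)

/-- The unitary discrete Fourier matrix of size `p`. -/
noncomputable def Fmat (p : ℕ) : Matrix (Fin p) (Fin p) ℂ :=
  Matrix.of fun j k =>
    Complex.exp (-(2 * Real.pi * Complex.I * (j : ℕ) * (k : ℕ)) / p) / (Real.sqrt p : ℂ)

/-- Fourier-domain block diagonalization `(F_pᴴ ⊗ I) · bcirc A · (F_p ⊗ I)`. -/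
noncomputable def fblocks {ι κ : Type} [Fintype ι] [Fintype κ] [DecidableEq ι] [DecidableEq κ]
    (A : Tensor ι κ p) : Matrix (Fin p × ι) (Fin p × κ) ℂ :=
  ((Fmat p)ᴴ ⊗ₖ (1 : Matrix ι ι ℂ)) * bcirc A * (Fmat p ⊗ₖ (1 : Matrix κ κ ℂ))

/-- `S` is F-diagonal: Fourier blocks are (generalized) diagonal with nonnegative real
entries. -/
def IsFDiag {ι κ : Type} [Fintype ι] [Fintype κ] [DecidableEq ι] [DecidableEq κ]
    (S : Tensor ι κ p) : Prop :=
  (∀ i j a b, fblocks S (i, a) (j, b) ≠ 0 → i = j) ∧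
  (∀ x y y', fblocks S x y ≠ 0 → fblocks S x y' ≠ 0 → y = y') ∧
  (∀ x x' y, fblocks S x y ≠ 0 → fblocks S x' y ≠ 0 → x = x') ∧
  (∀ x y, 0 ≤ (fblocks S x y).re ∧ (fblocks S x y).im = 0)

/-- A tensor `Q` is unitary for the T-product. -/
def IsTUnitary {ι : Type} [Fintype ι] [DecidableEq ι] (Q : Tensor ι ι p) : Prop :=
  tprod (tconjT Q) Q = tid ι p ∧ tprod Q (tconjT Q) = tid ι p

/-- `(U, S, V)` is a T-SVD of `A`. -/
def IsTSVD {ι κ : Type} [Fintype ι] [Fintype κ] [DecidableEq ι] [DecidableEq κ]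
    (A : Tensor ι κ p) (U : Tensor ι ι p) (S : Tensor ι κ p) (V : Tensor κ κ p) : Prop :=
  IsTUnitary U ∧ IsTUnitary V ∧ IsFDiag S ∧ A = tprod U (tprod S (tconjT V))

/-- Apply a scalar function to the singular values of an F-diagonal tensor. -/
noncomputable def fhat {ι κ : Type} [Fintype ι] [Fintype κ] [DecidableEq ι] [DecidableEq κ]
    (f : ℂ → ℂ) (S : Tensor ι κ p) : Tensor ι κ p :=
  bcircInv ((Fmat p ⊗ₖ (1 : Matrix ι ι ℂ)) * (fblocks S).map f *
    ((Fmat p)ᴴ ⊗ₖ (1 : Matrix κ κ ℂ)))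

open Classical in
/-- The generalized tensor function induced by the scalar function `f` via the T-SVD. -/
noncomputable def gtf {ι κ : Type} [Fintype ι] [Fintype κ] [DecidableEq ι] [DecidableEq κ]
    (f : ℂ → ℂ) (A : Tensor ι κ p) : Tensor ι κ p :=
  if h : ∃ t : Tensor ι ι p × Tensor ι κ p × Tensor κ κ p, IsTSVD A t.1 t.2.1 t.2.2 then
    tprod h.choose.1 (tprod (fhat f h.choose.2.1) (tconjT h.choose.2.2))
  else 0

/-- An odd scalar function. -/
def OddFn (f : ℂ → ℂ) : Prop := ∀ z, f (-z) = -f z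

open Classical in
/-- The Moore–Penrose inverse of a matrix. -/
noncomputable def mpinv {ι κ : Type} [Fintype ι] [Fintype κ] (M : Matrix ι κ ℂ) :
    Matrix κ ι ℂ :=
  if h : ∃ N : Matrix κ ι ℂ,
      M * N * M = M ∧ N * M * N = N ∧ (M * N)ᴴ = M * N ∧ (N * M)ᴴ = N * M then
    h.choose
  else 0

/-- The Moore–Penrose inverse of a tensor: `A^† := bcirc⁻¹ ((bcirc A)^†)`. -/
noncomputable def tpinv {ι κ : Type} [Fintype ι] [Fintype κ] (A : Tensor ι κ p) :
    Tensor κ ι p :=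
  bcircInv (mpinv (bcirc A))

open Classical in
/-- Matrix function of a Hermitian matrix via the spectral theorem. -/
noncomputable def hermFun {ι : Type} [Fintype ι] [DecidableEq ι] (f : ℂ → ℂ)
    (M : Matrix ι ι ℂ) : Matrix ι ι ℂ :=
  if h : M.IsHermitian then
    (h.eigenvectorUnitary : Matrix ι ι ℂ) *
      Matrix.diagonal (fun i => f ((h.eigenvalues i : ℝ) : ℂ)) *
      (h.eigenvectorUnitary : Matrix ι ι ℂ)ᴴ
  else 0

open Classical in
/-- Square root of a positive semidefinite matrix. -/
noncomputable def msqrt {ι : Type} [Fintype ι] [DecidableEq ι] (M : Matrix ι ι ℂ) :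
    Matrix ι ι ℂ :=
  if h : M.PosSemidef then
    (h.1.eigenvectorUnitary : Matrix ι ι ℂ) *
      Matrix.diagonal ((fun x : ℝ => (x : ℂ)) ∘ Real.sqrt ∘ h.1.eigenvalues) *
      (star h.1.eigenvectorUnitary : Matrix ι ι ℂ)
  else 0

/-- The standard tensor T-function (here used on Hermitian tensors). -/
noncomputable def stdTf {ι : Type} [Fintype ι] [DecidableEq ι] (f : ℂ → ℂ)
    (A : Tensor ι ι p) : Tensor ι ι p :=
  bcircInv (hermFun f (bcirc A))

/-- The tensor square root of a (PSD) F-square tensor. -/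
noncomputable def tsqrt {ι : Type} [Fintype ι] [DecidableEq ι] (A : Tensor ι ι p) :
    Tensor ι ι p :=
  bcircInv (msqrt (bcirc A))

/-- 2×2 block tensor, formed by block-concatenating frontal slices. -/
def tblock {ι₁ ι₂ κ₁ κ₂ : Type} (A : Tensor ι₁ κ₁ p) (B : Tensor ι₁ κ₂ p)
    (C : Tensor ι₂ κ₁ p) (D : Tensor ι₂ κ₂ p) : Tensor (ι₁ ⊕ ι₂) (κ₁ ⊕ κ₂) p :=
  fun k => Matrix.fromBlocks (A k) (B k) (C k) (D k)

end TProd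

/-! The T-product is cyclic convolution of frontal slices, `(A * B)ₖ = ∑ₗ A₍ₖ₋ₗ₎ Bₗ`, while block
`(i, j)` of `bcirc A · bcirc B` is `∑ₗ A₍ᵢ₋ₗ₎ B₍ₗ₋ⱼ₎`; the substitution `l ↦ l + j` turns the latter
into slice `i - j` of `A * B`, which is block `(i, j)` of `bcirc (A * B)`. -/

theorem Fintype.sum_sub_sub_eq_sum_sub_sub {G M : Type*} [AddCommGroup G] [Fintype G]
    [AddCommMonoid M] (F : G → G → M) (i j : G) :
    ∑ l, F (i - j - l) l = ∑ l, F (i - l) (l - j) :=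
  Fintype.sum_equiv (Equiv.addRight j) _ _ fun l => by
    rw [Equiv.coe_addRight, add_sub_cancel_right, sub_sub, add_comm j]

namespace TProd

variable {p : ℕ} {ι κ μ : Type} [Fintype κ]

theorem tprod_eq_sum (A : Tensor ι κ p) (B : Tensor κ μ p) (k : Fin p) :
    tprod A B k = ∑ l, A (k - l) * B l := by
  ext a b
  simp only [tprod, tfold, bcirc, tunfold, Matrix.of_apply, Matrix.mul_apply,
    Fintype.sum_prod_type, Matrix.sum_apply]

theorem bcirc_mul_bcirc_apply (A : Tensor ι κ p) (B : Tensor κ μ p) (i j : Fin p) (a : ι)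
    (b : μ) : (bcirc A * bcirc B) (i, a) (j, b) = (∑ l, A (i - l) * B (l - j)) a b := by
  simp only [bcirc, Matrix.of_apply, Matrix.mul_apply, Fintype.sum_prod_type,
    Matrix.sum_apply]

end TProd

open TProd Matrix Kronecker

theorem bcirc_tprod_general {m n s p : ℕ}
    (A : Tensor (Fin m) (Fin n) p) (B : Tensor (Fin n) (Fin s) p) :
    bcirc (tprod A B) = bcirc A * bcirc B := by
  ext ⟨i, a⟩ ⟨j, b⟩
  obtain _ | p := p
  · exact i.elim0
  rw [bcirc_mul_bcirc_apply, ← Fintype.sum_sub_sub_eq_sum_sub_sub fun k l => A k * B l,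
    ← tprod_eq_sum]
  rfl

/-- `bcirc (A * B) = bcirc A · bcirc B`. -/
theorem bcirc_tprod {m n s p : ℕ} [NeZero p]
    (A : Tensor (Fin m) (Fin n) p) (B : Tensor (Fin n) (Fin s) p) :
    bcirc (tprod A B) = bcirc A * bcirc B :=
  bcirc_tprod_general A B
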